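/- arXiv:2008.03668 — 4 statements merged into one kernel-verified Lean document; each statement's English description precedes it below -/
import Mathlib

section
/- No continuous linear operator on a finite-dimensional complex normed space of positive dimension is hypercyclic: for every n ≥ 1, every linear operator A on ℂⁿ, and every x₀ ∈ ℂⁿ, the orbit {Aᵏx₀ : k = 0, 1, 2, …} is not dense in ℂⁿ. -/
/-!
Over an algebraically closed field the transpose of `A` has an eigenvector `φ ≠ 0`, say
`φ ∘ A = μ φ`. The continuous surjection `φ` maps the orbit of `x` onto the orbit `μᵏ φ(x)` of a
scalar, so density of the former would force density of the latter. But the scalar orbit is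
bounded when `|μ| ≤ 1` or `φ(x) = 0`, and avoids the ball of radius `|φ(x)|` otherwise.
-/

open Metric

theorem not_denseRange_pow_mul {𝕜 : Type*} [NontriviallyNormedField 𝕜] (μ c : 𝕜) :
    ¬ DenseRange fun k : ℕ => μ ^ k * c := by
  intro hdense
  by_cases hbounded : ‖μ‖ ≤ 1 ∨ c = 0
  · have hsub : Set.range (fun k : ℕ => μ ^ k * c) ⊆ closedBall 0 ‖c‖ := by
      rintro _ ⟨k, rfl⟩
      rcases hbounded with hμ | rfl
      · simpa [norm_mul, norm_pow] using
          mul_le_of_le_one_left (norm_nonneg c) (pow_le_one₀ (norm_nonneg μ) hμ)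
      · simp
    apply NormedSpace.unbounded_univ 𝕜 𝕜
    rw [← hdense.closure_eq]
    exact (isBounded_closedBall.subset hsub).closure
  · obtain ⟨hμ, hc⟩ := not_or.mp hbounded
    rw [not_le] at hμ
    obtain ⟨_, hball, k, rfl⟩ :=
      hdense.inter_open_nonempty _ isOpen_ball ⟨0, mem_ball_self (norm_pos_iff.mpr hc)⟩
    rw [mem_ball_zero_iff, norm_mul, norm_pow] at hball
    exact (le_mul_of_one_le_left (norm_nonneg c) (one_le_pow₀ hμ.le)).not_gt hball

theorem LinearMap.apply_pow_apply_of_comp_eq_smul {R M : Type*} [CommSemiring R] [AddCommMonoid M]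
    [Module R M] {A : Module.End R M} {φ : M →ₗ[R] R} {μ : R} (h : φ ∘ₗ A = μ • φ)
    (k : ℕ) (x : M) : φ ((A ^ k) x) = μ ^ k * φ x := by
  induction k generalizing x with
  | zero => simp
  | succ k ih => rw [pow_succ, Module.End.mul_apply, ih, ← LinearMap.comp_apply, h,
      LinearMap.smul_apply, smul_eq_mul, pow_succ, mul_assoc]

theorem Module.End.not_denseRange_pow_apply {𝕜 E : Type*} [NontriviallyNormedField 𝕜]
    [IsAlgClosed 𝕜] [CompleteSpace 𝕜] [NormedAddCommGroup E] [NormedSpace 𝕜 E]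
    [FiniteDimensional 𝕜 E] [Nontrivial E] (A : Module.End 𝕜 E) (x : E) :
    ¬ DenseRange fun k : ℕ => (A ^ k) x := by
  intro hdense
  obtain ⟨μ, hμ⟩ := Module.End.exists_eigenvalue A.dualMap
  obtain ⟨φ, hφ⟩ := hμ.exists_hasEigenvector
  have hφA : φ ∘ₗ A = μ • φ := hφ.apply_eq_smul
  have hφ_dense : DenseRange (⇑φ ∘ fun k : ℕ => (A ^ k) x) :=
    (LinearMap.surjective_of_ne_zero hφ.2).denseRange.comp hdense φ.continuous_of_finiteDimensional
  apply not_denseRange_pow_mul μ (φ x)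
  simpa only [Function.comp_def, LinearMap.apply_pow_apply_of_comp_eq_smul hφA] using hφ_dense

/-- No linear operator on a finite-dimensional complex space `ℂⁿ` (`n ≥ 1`)
is hypercyclic: for every `x₀`, the orbit `{Aᵏx₀ : k ∈ ℕ}` is not dense. -/
theorem stmt_14 (n : ℕ) (hn : 1 ≤ n)
    (A : Module.End ℂ (EuclideanSpace ℂ (Fin n))) (x₀ : EuclideanSpace ℂ (Fin n)) :
    ¬ Dense (Set.range fun k : ℕ => (A ^ k) x₀) := by
  have : Nonempty (Fin n) := ⟨⟨0, hn⟩⟩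
  exact A.not_denseRange_pow_apply x₀
end

section
/- (Rolewicz) For every complex scalar α with |α| > 1, the operator αT on ℓ²(ℕ), where T is the left (backward) shift T(x₁, x₂, x₃, …) = (x₂, x₃, …), is hypercyclic: there exists x₀ ∈ ℓ² whose orbit {(αT)ᵏx₀ : k = 0, 1, 2, …} is dense in ℓ². -/
/-!
Birkhoff's transitivity theorem: if every nonempty open set `U` meets the preimage of every
nonempty open set `V` under some iterate of a continuous map `f`, then for each set `V` of a
countable basis the points whose orbit enters `V` form a dense open set, and by Baire's theorem
the points lying in all of them, i.e. those with a dense orbit, form a dense set.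

For `αT` with `|α| > 1` transitivity is explicit: pick truncations `u ∈ U`, `v ∈ V` supported in
`[0, N)`, and let `S` be the forward shift. Then `u + α⁻ⁿ Sⁿ v → u`, while for `n ≥ N` the operator
`(αT)ⁿ` kills `u` and sends `α⁻ⁿ Sⁿ v` back to `v`.
-/

open Set Filter Topology TopologicalSpace
open scoped ENNReal

theorem exists_dense_range_iterate_of_transitive {X : Type*} [TopologicalSpace X] [BaireSpace X]
    [SecondCountableTopology X] [Nonempty X] {f : X → X} (hf : Continuous f)
    (htrans : ∀ U V : Set X, IsOpen U → U.Nonempty → IsOpen V → V.Nonempty →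
      ∃ n, (U ∩ f^[n] ⁻¹' V).Nonempty) :
    ∃ x, Dense (range fun n => f^[n] x) := by
  obtain ⟨B, hBc, hB0, hB⟩ := exists_countable_basis X
  have hopen : ∀ V ∈ B, IsOpen (⋃ n, f^[n] ⁻¹' V) := fun V hV =>
    isOpen_iUnion fun n => (hB.isOpen hV).preimage (hf.iterate n)
  have hdense : ∀ V ∈ B, Dense (⋃ n, f^[n] ⁻¹' V) := fun V hV =>
    dense_iff_inter_open.mpr fun U hU hUne => by
      obtain ⟨n, x, hxU, hxV⟩ := htrans U V hU hUne (hB.isOpen hV) (nonempty_iff_ne_empty.mpr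
        (ne_of_mem_of_not_mem hV hB0))
      exact ⟨x, hxU, mem_iUnion.mpr ⟨n, hxV⟩⟩
  obtain ⟨x, hx⟩ := (dense_biInter_of_isOpen hopen hBc hdense).nonempty
  refine ⟨x, dense_iff_inter_open.mpr fun W hW ⟨w, hwW⟩ => ?_⟩
  obtain ⟨V, hV, -, hVW⟩ := hB.exists_subset_of_mem_open hwW hW
  obtain ⟨n, hn⟩ := mem_iUnion.mp (mem_iInter₂.mp hx V hV)
  exact ⟨f^[n] x, hVW hn, n, rfl⟩

namespace lp
variable {𝕜 : Type*} [NormedField 𝕜] {p : ℝ≥0∞} [Fact (1 ≤ p)]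

theorem eventually_sum_range_single_mem (hp : p ≠ ⊤) {U : Set (lp (fun _ : ℕ => 𝕜) p)}
    (hU : IsOpen U) {z : lp (fun _ : ℕ => 𝕜) p} (hz : z ∈ U) :
    ∀ᶠ N in atTop, ∑ i ∈ Finset.range N, lp.single p i (z i) ∈ U :=
  (lp.hasSum_single hp z).tendsto_sum_nat.eventually (hU.mem_nhds hz)

theorem separableSpace_nat [SeparableSpace 𝕜] (hp : p ≠ ⊤) :
    SeparableSpace (lp (fun _ : ℕ => 𝕜) p) := by
  set S := Submodule.span 𝕜 (range fun i => lp.single (E := fun _ : ℕ => 𝕜) p i 1)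
  have hS : IsSeparable (S : Set (lp (fun _ : ℕ => 𝕜) p)) :=
    (countable_range _).isSeparable.span
  refine isSeparable_univ_iff.mp (hS.closure.mono fun z _ => ?_)
  refine mem_closure_of_tendsto (lp.hasSum_single hp z).tendsto_sum_nat
    (Eventually.of_forall fun N => S.sum_mem fun i _ => ?_)
  have h : z i • lp.single p i 1 ∈ S := S.smul_mem _ (Submodule.subset_span (mem_range_self i))
  rwa [← lp.single_smul, smul_eq_mul, mul_one] at h

end lp

section BackwardShift
variable {𝕜 : Type*} [NormedField 𝕜] {p : ℝ≥0∞} [Fact (1 ≤ p)]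

def IsBackwardShift (T : lp (fun _ : ℕ => 𝕜) p →L[𝕜] lp (fun _ : ℕ => 𝕜) p) : Prop :=
  ∀ x n, T x n = x (n + 1)

namespace IsBackwardShift
variable {T : lp (fun _ : ℕ => 𝕜) p →L[𝕜] lp (fun _ : ℕ => 𝕜) p} (hT : IsBackwardShift T)
include hT

theorem pow_apply (k : ℕ) (x : lp (fun _ : ℕ => 𝕜) p) (i : ℕ) : (T ^ k) x i = x (i + k) := by
  rw [FunLike.coe_pow_eq_iterate]
  induction k generalizing x with
  | zero => rfl
  | succ k ih => rw [Function.iterate_succ_apply, ih, hT, add_assoc]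

theorem pow_single_add (k i : ℕ) (a : 𝕜) : (T ^ k) (lp.single p (i + k) a) = lp.single p i a := by
  ext j
  simp only [hT.pow_apply, lp.single_apply, Pi.single_apply, add_left_inj]

theorem pow_sum_single_add (k : ℕ) (s : Finset ℕ) (c : ℕ → 𝕜) :
    (T ^ k) (∑ i ∈ s, lp.single p (i + k) (c i)) = ∑ i ∈ s, lp.single p i (c i) := by
  simp only [map_sum, hT.pow_single_add]

theorem pow_sum_range_single_eq_zero {k N : ℕ} (hNk : N ≤ k) (c : ℕ → 𝕜) :
    (T ^ k) (∑ i ∈ Finset.range N, lp.single p i (c i)) = 0 := by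
  ext j
  rw [hT.pow_apply, lp.coeFn_sum, Finset.sum_apply]
  exact Finset.sum_eq_zero fun i hi => Pi.single_eq_of_ne (by grind) _

theorem exists_iterate_smul_mem (hp : p ≠ ⊤) {α : 𝕜} (hα : 1 < ‖α‖)
    {U V : Set (lp (fun _ : ℕ => 𝕜) p)} (hU : IsOpen U) (hUne : U.Nonempty) (hV : IsOpen V)
    (hVne : V.Nonempty) : ∃ n, (U ∩ (⇑(α • T))^[n] ⁻¹' V).Nonempty := by
  obtain ⟨z, hz⟩ := hUne
  obtain ⟨y, hy⟩ := hVne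
  obtain ⟨N, hzN, hyN⟩ := ((lp.eventually_sum_range_single_mem hp hU hz).and
    (lp.eventually_sum_range_single_mem hp hV hy)).exists
  set u := ∑ i ∈ Finset.range N, lp.single p i (z i)
  set w : ℕ → lp (fun _ : ℕ => 𝕜) p := fun n => ∑ i ∈ Finset.range N, lp.single p (i + n) (y i)
  have hw : ∀ n, ‖w n‖ ≤ ∑ i ∈ Finset.range N, ‖y i‖ := fun n =>
    (norm_sum_le _ _).trans_eq (Finset.sum_congr rfl fun i _ =>
      lp.norm_single (zero_lt_one.trans_le Fact.out) _ _)
  have hα' : ‖α⁻¹‖ < 1 := by rw [norm_inv]; exact inv_lt_one_of_one_lt₀ hα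
  have hsmall : Tendsto (fun n => α⁻¹ ^ n • w n) atTop (𝓝 0) := by
    have hC := (tendsto_pow_atTop_nhds_zero_of_lt_one (norm_nonneg _) hα').mul_const
      (∑ i ∈ Finset.range N, ‖y i‖)
    rw [zero_mul] at hC
    refine squeeze_zero_norm (fun n => ?_) hC
    rw [norm_smul, norm_pow]
    exact mul_le_mul_of_nonneg_left (hw n) (by positivity)
  have hclose : Tendsto (fun n => u + α⁻¹ ^ n • w n) atTop (𝓝 u) := by
    simpa using tendsto_const_nhds.add hsmall
  obtain ⟨n, hnU, hNn⟩ := ((hclose.eventually (hU.mem_nhds hzN)).and (eventually_ge_atTop N)).exists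
  refine ⟨n, u + α⁻¹ ^ n • w n, hnU, ?_⟩
  have hα0 : α ≠ 0 := norm_pos_iff.mp (one_pos.trans hα)
  show (⇑(α • T))^[n] (u + α⁻¹ ^ n • w n) ∈ V
  rwa [← FunLike.coe_pow_eq_iterate, smul_pow, smul_apply, map_add, map_smul,
    hT.pow_sum_range_single_eq_zero hNn, hT.pow_sum_single_add, zero_add, smul_smul, ← mul_pow,
    mul_inv_cancel₀ hα0, one_pow, one_smul]

end IsBackwardShift
end BackwardShift

/-- (Rolewicz) For every `α ∈ ℂ` with `|α| > 1`, the operator `αT` on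
`ℓ²(ℕ)`, where `T` is the backward shift, is hypercyclic: some `x₀` has a
dense orbit `{(αT)ᵏx₀ : k ∈ ℕ}`. -/
theorem stmt_15 (T : lp (fun _ : ℕ => ℂ) 2 →L[ℂ] lp (fun _ : ℕ => ℂ) 2)
    (hT : ∀ (x : lp (fun _ : ℕ => ℂ) 2) (n : ℕ), (T x) n = x (n + 1))
    (α : ℂ) (hα : 1 < ‖α‖) :
    ∃ x₀ : lp (fun _ : ℕ => ℂ) 2,
      Dense (Set.range fun k : ℕ => ((α • T) ^ k) x₀) := by
  have : SeparableSpace (lp (fun _ : ℕ => ℂ) 2) := lp.separableSpace_nat ENNReal.ofNat_ne_top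
  obtain ⟨x₀, hx₀⟩ := exists_dense_range_iterate_of_transitive (α • T).continuous
    fun _ _ hU hUne hV hVne =>
      IsBackwardShift.exists_iterate_smul_mem hT ENNReal.ofNat_ne_top hα hU hUne hV hVne
  exact ⟨x₀, by simpa only [FunLike.coe_pow_eq_iterate] using hx₀⟩
end

section
/- (Herzog) For every irrational real number α, the rotation operator R on ℝ² given by the matrix with rows (cos 2πα, sin 2πα) and (−sin 2πα, cos 2πα) is supercyclic: there exists x₀ ∈ ℝ² such that the projective orbit {λ Rᵏ x₀ : k = 0, 1, 2, …; λ ∈ ℝ} is dense in ℝ². -/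
/-!
The orbit of `e₁ = (1, 0)` is `(cos kθ, -sin kθ)` with `θ = 2πα`. As `α` is irrational, the
multiples `kθ` are dense in `ℝ/2πℤ` (natural multiples suffice because the circle is compact),
and `(l, ψ) ↦ l • (cos ψ, -sin ψ)` is a continuous surjection `ℝ × ℝ/2πℤ → ℝ²`, so it maps the
dense set `ℝ × {kθ}` onto a dense set.
-/

open Real

theorem rotation_pow (θ : ℝ) (k : ℕ) :
    !![cos θ, sin θ; -sin θ, cos θ] ^ k
      = !![cos (k * θ), sin (k * θ); -sin (k * θ), cos (k * θ)] := by
  induction k with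
  | zero => simp [Matrix.one_fin_two]
  | succ n ih =>
    rw [pow_succ, ih, Matrix.mul_fin_two]
    push_cast
    simp only [add_one_mul, cos_add, sin_add]
    ring_nf

theorem rotation_pow_mulVec_one_zero (θ : ℝ) (k : ℕ) :
    (!![cos θ, sin θ; -sin θ, cos θ] ^ k).mulVec ![1, 0] = ![cos (k * θ), -sin (k * θ)] := by
  rw [rotation_pow]
  ext i
  fin_cases i <;> simp

theorem Real.Angle.denseRange_nsmul_coe {a : ℝ} (ha : Irrational (a / (2 * π))) :
    DenseRange (fun k : ℕ => k • (a : Real.Angle)) :=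
  -- `Real.Angle` is `AddCircle (2 * π)`, but only the latter has the compactness instance.
  haveI : Fact (0 < 2 * π) := ⟨two_pi_pos⟩
  (denseRange_zsmul_iff_nsmul (G := AddCircle (2 * π))).mp
    (AddCircle.denseRange_zsmul_coe_iff.mpr ha)

theorem exists_smul_cos_neg_sin_eq (y : Fin 2 → ℝ) :
    ∃ (l : ℝ) (ψ : Real.Angle), l • ![ψ.cos, -ψ.sin] = y := by
  set z : ℂ := ⟨y 0, -y 1⟩
  refine ⟨‖z‖, z.arg, ?_⟩
  ext i
  fin_cases i <;> simp [z]

theorem dense_smul_cos_neg_sin {D : Set Real.Angle} (hD : Dense D) :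
    Dense {y : Fin 2 → ℝ | ∃ (l : ℝ), ∃ ψ ∈ D, y = l • ![ψ.cos, -ψ.sin]} := by
  set Φ : ℝ × Real.Angle → Fin 2 → ℝ := fun p => p.1 • ![p.2.cos, -p.2.sin]
  have hcos := Real.Angle.continuous_cos
  have hsin := Real.Angle.continuous_sin
  have hΦ : Continuous Φ := by fun_prop
  have hsurj : Function.Surjective Φ := fun y => by
    obtain ⟨l, ψ, h⟩ := exists_smul_cos_neg_sin_eq y
    exact ⟨(l, ψ), h⟩
  refine (hsurj.denseRange.dense_image hΦ (dense_univ.prod hD)).mono ?_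
  rintro _ ⟨⟨l, ψ⟩, ⟨-, hψ⟩, rfl⟩
  exact ⟨l, ψ, hψ, rfl⟩

/-- (Herzog) For every irrational `α`, the rotation of `ℝ²` by angle `2πα` is
supercyclic: there is `x₀ ∈ ℝ²` whose projective orbit
`{λ Rᵏ x₀ : k ∈ ℕ, λ ∈ ℝ}` is dense in `ℝ²`. -/
theorem stmt_16 (α : ℝ) (hα : Irrational α) :
    ∃ x₀ : Fin 2 → ℝ,
      Dense {y : Fin 2 → ℝ | ∃ (k : ℕ) (l : ℝ),
        y = l • ((!![Real.cos (2 * Real.pi * α), Real.sin (2 * Real.pi * α);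
            -Real.sin (2 * Real.pi * α), Real.cos (2 * Real.pi * α)] ^ k).mulVec x₀)} := by
  have hdense : DenseRange (fun k : ℕ => k • ((2 * π * α : ℝ) : Real.Angle)) :=
    Real.Angle.denseRange_nsmul_coe (by rwa [mul_div_cancel_left₀ α two_pi_pos.ne'])
  refine ⟨![1, 0], (dense_smul_cos_neg_sin hdense).mono ?_⟩
  rintro _ ⟨l, _, ⟨k, rfl⟩, rfl⟩
  refine ⟨k, l, ?_⟩
  dsimp only
  rw [rotation_pow_mulVec_one_zero, ← Real.Angle.coe_nsmul, nsmul_eq_mul,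
    Real.Angle.cos_coe, Real.Angle.sin_coe]
end

section
/- (Bart et al.) If P₁, …, P_k are idempotent n × n complex matrices (Pⱼ² = Pⱼ for each j) such that P₁ + ⋯ + P_k = 0, then Pⱼ = 0 for every j = 1, …, k. -/
open Finset Module LinearMap

/- The trace of an idempotent is the dimension of its range, a natural number. In characteristic
zero a sum of natural numbers vanishes only if each summand does, and an idempotent of trace zero
is zero. -/

theorem LinearMap.eq_zero_of_isIdempotentElem_of_sum_eq_zero {K V ι : Type*} [Field K]
    [CharZero K] [AddCommGroup V] [Module K V] [FiniteDimensional K V] (s : Finset ι)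
    (e : ι → Module.End K V) (he : ∀ i ∈ s, IsIdempotentElem (e i)) (hsum : ∑ i ∈ s, e i = 0) :
    ∀ i ∈ s, e i = 0 := by
  have htrace : ∀ i ∈ s, trace K V (e i) = (finrank K (range (e i)) : K) :=
    fun i hi => (he i hi).isProj_range.trace
  have hrank : ((∑ i ∈ s, finrank K (range (e i)) : ℕ) : K) = 0 := by
    rw [Nat.cast_sum, ← sum_congr rfl htrace, ← map_sum, hsum, map_zero]
  rw [Nat.cast_eq_zero, sum_eq_zero_iff] at hrank
  intro i hi
  apply (he i hi).eq_zero_of_trace_eq_zero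
  rw [htrace i hi, hrank i hi, Nat.cast_zero]

theorem Matrix.eq_zero_of_isIdempotentElem_of_sum_eq_zero {K m ι : Type*} [Field K] [CharZero K]
    [Fintype m] [DecidableEq m] (s : Finset ι) (P : ι → Matrix m m K)
    (hP : ∀ i ∈ s, IsIdempotentElem (P i)) (hsum : ∑ i ∈ s, P i = 0) :
    ∀ i ∈ s, P i = 0 := by
  have hlin := LinearMap.eq_zero_of_isIdempotentElem_of_sum_eq_zero s (fun i => toLinAlgEquiv' (P i))
    (fun i hi => (hP i hi).map _) (by rw [← map_sum, hsum, map_zero])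
  exact fun i hi => toLinAlgEquiv'.map_eq_zero_iff.mp (hlin i hi)

/-- (Bart et al.) If `P₁, …, P_k` are idempotent `n × n` complex matrices
with `P₁ + ⋯ + P_k = 0`, then every `Pⱼ = 0`. -/
theorem stmt_17 (n k : ℕ) (P : Fin k → Matrix (Fin n) (Fin n) ℂ)
    (hidem : ∀ j, P j ^ 2 = P j) (hsum : ∑ j, P j = 0) :
    ∀ j, P j = 0 := fun j =>
  Matrix.eq_zero_of_isIdempotentElem_of_sum_eq_zero univ P
    (fun i _ => by rw [IsIdempotentElem, ← sq, hidem i]) hsum j (mem_univ j)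
end
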